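/- arXiv:2501.16676 — 2 statements merged into one kernel-verified Lean document; each statement's English description precedes it below -/
import Mathlib

section
/- For any distinct TPM (P_{x,e}) over finite nonempty state sets Ω_X and Ω_E, the flexibility is nonnegative: Syn(P) = EI(joint mechanism) − EI(P^X) − EI(P^E) ≥ 0. -/
/-- Effective information (base 2, with the convention `0 · log 0 = 0`) of a transition
probability matrix `P` whose rows are indexed by `ι` and whose output alphabet is `α`:
`EI(P) = (1/N) ∑_i ∑_j P_i(j) · log₂( N · P_i(j) / ∑_k P_k(j) )` with `N = |ι|`. -/
noncomputable def EI {ι α : Type} [Fintype ι] [Fintype α] (P : ι → α → ℝ) : ℝ :=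
  ∑ i, ∑ j, (1 / (Fintype.card ι : ℝ)) * P i j *
    Real.logb 2 ((Fintype.card ι : ℝ) * P i j / ∑ k, P k j)

/-- The joint mechanism of a distinct TPM: rows indexed by `Ω_X × Ω_E`, output `Ω_X`. -/
def jointMech {α ε : Type} (P : α → ε → α → ℝ) : (α × ε) → α → ℝ :=
  fun xe y => P xe.1 xe.2 y

/-- The individual mechanism `P^X` of a distinct TPM:
`P^X_x = (1/|Ω_E|) ∑_e P_{x,e}`. -/
noncomputable def indivMech {α ε : Type} [Fintype ε] (P : α → ε → α → ℝ) : α → α → ℝ :=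
  fun x y => (1 / (Fintype.card ε : ℝ)) * ∑ e, P x e y

/-- The external driving mechanism `P^E` of a distinct TPM:
`P^E_e = (1/|Ω_X|) ∑_x P_{x,e}`. -/
noncomputable def extMech {α ε : Type} [Fintype α] (P : α → ε → α → ℝ) : ε → α → ℝ :=
  fun e y => (1 / (Fintype.card α : ℝ)) * ∑ x, P x e y

/-- Flexibility (effective synergy) of a distinct TPM:
`Syn(P) = EI(joint mechanism) − EI(P^X) − EI(P^E)`. -/
noncomputable def flexibility {α ε : Type} [Fintype α] [Fintype ε]
    (P : α → ε → α → ℝ) : ℝ :=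
  EI (jointMech P) - EI (indivMech P) - EI (extMech P)

/-- Shannon entropy (in bits, with the convention `0 · log 0 = 0`) of a probability
vector `Q`. -/
noncomputable def Hvec {α : Type} [Fintype α] (Q : α → ℝ) : ℝ :=
  -∑ j, Q j * Real.logb 2 (Q j)

/-- Expansiveness of a distinct TPM. -/
noncomputable def expansiveness {α ε : Type} [Fintype α] [Fintype ε]
    (P : α → ε → α → ℝ) : ℝ :=
  (1 / (Fintype.card ε : ℝ)) *
      ∑ e, Hvec (fun y => (1 / (Fintype.card α : ℝ)) * ∑ x, P x e y)
    + (1 / (Fintype.card α : ℝ)) *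
      ∑ x, Hvec (fun y => (1 / (Fintype.card ε : ℝ)) * ∑ e, P x e y)

/-- Introversion of a distinct TPM. -/
noncomputable def introversion {α ε : Type} [Fintype α] [Fintype ε]
    (P : α → ε → α → ℝ) : ℝ :=
  2 * Real.logb 2 (Fintype.card α)
    - (1 / ((Fintype.card α : ℝ) * (Fintype.card ε : ℝ))) * ∑ x, ∑ e, Hvec (P x e)
    - Hvec (fun y => (1 / ((Fintype.card α : ℝ) * (Fintype.card ε : ℝ))) *
        ∑ x, ∑ e, P x e y)

/-! Write `A x y = ∑ e, P x e y`, `B e y = ∑ x, P x e y` and `S y = ∑ x, ∑ e, P x e y`.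
All three effective informations are averages of `P x e y` against logarithms of ratios over the
common denominator `S y`; in the flexibility these denominators and the factors `|Ω_X|`, `|Ω_E|`
cancel, leaving
`(|Ω_X| |Ω_E|)⁻¹ ∑ P x e y · log₂ (P x e y / (A x y · B e y / S y))`.
For each output `y` this is a Kullback–Leibler divergence between `P · y` and the product of its
marginals `A · y * B · y / S y`, which has the same total mass `S y`; Gibbs' inequality makes it
nonnegative. -/

open Finset Real

lemma sub_le_mul_log_div {f g : ℝ} (hf : 0 ≤ f) (hg : 0 ≤ g) (hfg : g = 0 → f = 0) :
    f - g ≤ f * log (f / g) := by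
  rcases hf.eq_or_lt with rfl | hf
  · simpa using hg
  have hg : 0 < g := hg.lt_of_ne fun h => hf.ne' (hfg h.symm)
  have h := one_sub_inv_le_log_of_pos (div_pos hf hg)
  rw [inv_div] at h
  calc f - g = f * (1 - g / f) := by field_simp
    _ ≤ f * log (f / g) := mul_le_mul_of_nonneg_left h hf.le

theorem sum_mul_log_div_nonneg {ι : Type*} [Fintype ι] (f g : ι → ℝ) (hf : ∀ i, 0 ≤ f i)
    (hg : ∀ i, 0 ≤ g i) (hfg : ∀ i, g i = 0 → f i = 0) (hmass : ∑ i, g i ≤ ∑ i, f i) :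
    0 ≤ ∑ i, f i * log (f i / g i) :=
  calc 0 ≤ ∑ i, (f i - g i) := by rw [sum_sub_distrib]; linarith
    _ ≤ ∑ i, f i * log (f i / g i) :=
      sum_le_sum fun i _ => sub_le_mul_log_div (hf i) (hg i) (hfg i)

lemma sum_sum_marginal_mul_div {ι κ : Type*} [Fintype ι] [Fintype κ] (Q : ι → κ → ℝ) :
    ∑ i, ∑ k, (∑ k', Q i k') * (∑ i', Q i' k) / ∑ i', ∑ k', Q i' k' = ∑ i, ∑ k, Q i k := by
  simp only [← sum_div, ← mul_sum, ← sum_mul]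
  rw [sum_comm (f := fun k i => Q i k), mul_self_div_self]

theorem sum_mul_log_div_marginals_nonneg {ι κ : Type*} [Fintype ι] [Fintype κ]
    (Q : ι → κ → ℝ) (hQ : ∀ i k, 0 ≤ Q i k) :
    0 ≤ ∑ i, ∑ k, Q i k *
      log (Q i k / ((∑ k', Q i k') * (∑ i', Q i' k) / ∑ i', ∑ k', Q i' k')) := by
  have hQ_le_A i k : Q i k ≤ ∑ k', Q i k' := single_le_sum (fun k' _ => hQ i k') (mem_univ k)
  have hQ_le_B i k : Q i k ≤ ∑ i', Q i' k := single_le_sum (fun i' _ => hQ i' k) (mem_univ i)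
  have hA_le_S i : ∑ k', Q i k' ≤ ∑ i', ∑ k', Q i' k' :=
    single_le_sum (f := fun i => ∑ k', Q i k') (fun i' _ => sum_nonneg fun k' _ => hQ i' k')
      (mem_univ i)
  have hgibbs := sum_mul_log_div_nonneg (ι := ι × κ) (fun p => Q p.1 p.2)
    (fun p => (∑ k', Q p.1 k') * (∑ i', Q i' p.2) / ∑ i', ∑ k', Q i' k')
    (fun p => hQ p.1 p.2)
    (fun p => div_nonneg (mul_nonneg (sum_nonneg fun _ _ => hQ _ _)
      (sum_nonneg fun _ _ => hQ _ _)) (sum_nonneg fun _ _ => sum_nonneg fun _ _ => hQ _ _))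
    (fun ⟨i, k⟩ h => by
      refine le_antisymm ?_ (hQ i k)
      rcases div_eq_zero_iff.1 h with hAB | hS
      · rcases mul_eq_zero.1 hAB with hA | hB
        · exact hA ▸ hQ_le_A i k
        · exact hB ▸ hQ_le_B i k
      · exact hS ▸ (hQ_le_A i k).trans (hA_le_S i))
    (by simp only [Fintype.sum_prod_type, sum_sum_marginal_mul_div, le_refl])
  simpa only [Fintype.sum_prod_type] using hgibbs

theorem sum_mul_logb_div_marginals_nonneg {ι κ β : Type*} [Fintype ι] [Fintype κ] [Fintype β]
    (P : ι → κ → β → ℝ) (hP : ∀ i k y, 0 ≤ P i k y) :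
    0 ≤ ∑ i, ∑ k, ∑ y, P i k y *
      logb 2 (P i k y / ((∑ k', P i k' y) * (∑ i', P i' k y) / ∑ i', ∑ k', P i' k' y)) := by
  simp only [sum_comm (γ := κ) (α := β), sum_comm (γ := ι) (α := β)]
  refine sum_nonneg fun y _ => ?_
  simp only [logb, mul_div_assoc', ← sum_div]
  exact div_nonneg (sum_mul_log_div_marginals_nonneg (fun i k => P i k y) fun i k => hP i k y)
    (log_nonneg one_le_two)

lemma mul_logb_joint_sub_logb_marginals {c N M p a b s : ℝ} (hN : 0 < N) (hM : 0 < M)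
    (hp : 0 ≤ p) (hpa : p ≤ a) (hpb : p ≤ b) (has : a ≤ s) :
    p * (logb c (N * M * p / s) - logb c (N * a / s) - logb c (M * b / s)) =
      p * logb c (p / (a * b / s)) := by
  rcases hp.eq_or_lt with rfl | hp
  · simp
  have ha := hp.trans_le hpa
  have hb := hp.trans_le hpb
  have hs := ha.trans_le has
  rw [div_div_eq_mul_div]
  simp only [logb_div, logb_mul, ne_eq, mul_eq_zero, hN.ne', hM.ne', hp.ne', ha.ne', hb.ne',
    hs.ne', or_self, not_false_eq_true]
  ring

section Mechanisms

variable {α ε : Type} [Fintype α] [Fintype ε]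

lemma EI_jointMech (P : α → ε → α → ℝ) :
    EI (jointMech P) = ∑ x, ∑ e, ∑ y, ((Fintype.card α : ℝ) * Fintype.card ε)⁻¹ *
      (P x e y * logb 2 (Fintype.card α * Fintype.card ε * P x e y / ∑ x', ∑ e', P x' e' y)) := by
  simp only [EI, jointMech, Fintype.card_prod, Fintype.sum_prod_type, Nat.cast_mul, one_div,
    mul_assoc]

lemma EI_rowAverage {ι κ β : Type} [Fintype ι] [Fintype κ] [Fintype β] [Nonempty κ]
    (P : ι → κ → β → ℝ) :
    EI (fun i y => 1 / (Fintype.card κ : ℝ) * ∑ k, P i k y) =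
      ∑ i, ∑ k, ∑ y, ((Fintype.card ι : ℝ) * Fintype.card κ)⁻¹ *
        (P i k y * logb 2 (Fintype.card ι * (∑ k', P i k' y) / ∑ i', ∑ k', P i' k' y)) := by
  have hc : 1 / (Fintype.card κ : ℝ) ≠ 0 := by positivity
  simp only [EI]
  refine sum_congr rfl fun i _ => ?_
  rw [sum_comm]
  refine sum_congr rfl fun y _ => ?_
  rw [← mul_sum, mul_left_comm (Fintype.card ι : ℝ), mul_div_mul_left _ _ hc, ← mul_sum, ← sum_mul]
  ring

lemma EI_indivMech [Nonempty ε] (P : α → ε → α → ℝ) :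
    EI (indivMech P) = ∑ x, ∑ e, ∑ y, ((Fintype.card α : ℝ) * Fintype.card ε)⁻¹ *
      (P x e y * logb 2 (Fintype.card α * (∑ e', P x e' y) / ∑ x', ∑ e', P x' e' y)) :=
  EI_rowAverage P

lemma EI_extMech [Nonempty α] (P : α → ε → α → ℝ) :
    EI (extMech P) = ∑ x, ∑ e, ∑ y, ((Fintype.card α : ℝ) * Fintype.card ε)⁻¹ *
      (P x e y * logb 2 (Fintype.card ε * (∑ x', P x' e y) / ∑ x', ∑ e', P x' e' y)) := by
  refine (EI_rowAverage (fun e x y => P x e y)).trans ?_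
  rw [sum_comm]
  simp only [mul_comm (Fintype.card ε : ℝ) (Fintype.card α), sum_comm (γ := ε) (α := α)]

lemma flexibility_eq_mul_sum_mul_logb [Nonempty α] [Nonempty ε] (P : α → ε → α → ℝ)
    (hP : ∀ x e y, 0 ≤ P x e y) :
    flexibility P = ((Fintype.card α : ℝ) * Fintype.card ε)⁻¹ * ∑ x, ∑ e, ∑ y, P x e y *
      logb 2 (P x e y / ((∑ e', P x e' y) * (∑ x', P x' e y) / ∑ x', ∑ e', P x' e' y)) := by
  have hN : (0 : ℝ) < Fintype.card α := by exact_mod_cast Fintype.card_pos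
  have hM : (0 : ℝ) < Fintype.card ε := by exact_mod_cast Fintype.card_pos
  rw [flexibility, EI_jointMech, EI_indivMech, EI_extMech]
  simp only [mul_sum (a := ((Fintype.card α : ℝ) * Fintype.card ε)⁻¹), ← sum_sub_distrib,
    ← mul_sub]
  refine sum_congr rfl fun x _ => sum_congr rfl fun e _ => sum_congr rfl fun y _ => ?_
  have hA_le_S : ∑ e', P x e' y ≤ ∑ x', ∑ e', P x' e' y :=
    single_le_sum (f := fun x => ∑ e', P x e' y)
      (fun x' _ => sum_nonneg fun e' _ => hP x' e' y) (mem_univ x)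
  rw [mul_logb_joint_sub_logb_marginals hN hM (hP x e y)
    (single_le_sum (fun e' _ => hP x e' y) (mem_univ e))
    (single_le_sum (fun x' _ => hP x' e y) (mem_univ x)) hA_le_S]

end Mechanisms

theorem statement7_general {α ε : Type} [Fintype α] [Fintype ε] [Nonempty α] [Nonempty ε]
    (P : α → ε → α → ℝ) (hPnn : ∀ x e y, 0 ≤ P x e y) :
    0 ≤ EI (jointMech P) - EI (indivMech P) - EI (extMech P) := by
  change 0 ≤ flexibility P
  rw [flexibility_eq_mul_sum_mul_logb P hPnn]
  exact mul_nonneg (by positivity) (sum_mul_logb_div_marginals_nonneg P hPnn)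

/-- For any distinct TPM `(P_{x,e})` over finite nonempty state sets `Ω_X, Ω_E`,
the flexibility is nonnegative: `Syn(P) = EI(joint) − EI(P^X) − EI(P^E) ≥ 0`. -/
theorem statement7 {α ε : Type} [Fintype α] [Fintype ε] [Nonempty α] [Nonempty ε]
    (P : α → ε → α → ℝ) (hPnn : ∀ x e y, 0 ≤ P x e y) (hProw : ∀ x e, ∑ y, P x e y = 1) :
    0 ≤ EI (jointMech P) - EI (indivMech P) - EI (extMech P) :=
  statement7_general P hPnn
end

section
/- For any distinct TPM (P_{x,e}) over finite nonempty state sets Ω_X and Ω_E, the flexibility decomposes as Syn(P) = Exp(P) + Int(P) − 2·log₂|Ω_X|, where Exp is the expansiveness and Int is the introversion. -/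
/-!
Effective information is a mutual information: for a TPM with nonnegative rows, `EI(P)` is the
entropy of the average row minus the average entropy of the rows. The joint, individual and
external mechanisms all have the same average row, namely the grand mean of the `P_{x,e}`, so
writing each of the three `EI` terms in this form turns `Syn(P)` into a linear combination of
exactly the entropies that make up `Exp(P)` and `Int(P)`.
-/

open Finset

lemma mul_logb_mul_div_eq {b N p s : ℝ} (hN : N ≠ 0) (hs : p ≠ 0 → s ≠ 0) :
    p * Real.logb b (N * p / s) = p * Real.logb b p - p * Real.logb b (1 / N * s) := by
  rcases eq_or_ne p 0 with rfl | hp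
  · simp
  · rw [show N * p / s = p / (1 / N * s) by field_simp,
      Real.logb_div hp (by simpa [hN] using hs hp)]
    ring

theorem EI_eq_entropy_mean_sub_mean_entropy {ι β : Type} [Fintype ι] [Fintype β]
    (P : ι → β → ℝ) (hP : ∀ i j, 0 ≤ P i j) :
    EI P = Hvec (fun j => 1 / (Fintype.card ι : ℝ) * ∑ i, P i j)
      - 1 / (Fintype.card ι : ℝ) * ∑ i, Hvec (P i) := by
  unfold EI
  set N : ℝ := (Fintype.card ι : ℝ)
  set Q : β → ℝ := fun j => 1 / N * ∑ i, P i j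
  have hterm : ∀ i j, 1 / N * P i j * Real.logb 2 (N * P i j / ∑ k, P k j)
      = 1 / N * (P i j * Real.logb 2 (P i j)) - 1 / N * P i j * Real.logb 2 (Q j) := by
    intro i j
    have : Nonempty ι := ⟨i⟩
    have hN : N ≠ 0 := Nat.cast_ne_zero.mpr Fintype.card_ne_zero
    have hs : P i j ≠ 0 → ∑ k, P k j ≠ 0 := fun hp =>
      (sum_pos' (fun k _ => hP k j) ⟨i, mem_univ i, (hP i j).lt_of_ne' hp⟩).ne'
    rw [mul_assoc, mul_logb_mul_div_eq hN hs]
    ring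
  calc ∑ i, ∑ j, 1 / N * P i j * Real.logb 2 (N * P i j / ∑ k, P k j)
      = 1 / N * ∑ i, ∑ j, P i j * Real.logb 2 (P i j)
          - ∑ j, (1 / N * ∑ i, P i j) * Real.logb 2 (Q j) := by
        simp only [hterm, sum_sub_distrib, mul_sum, sum_mul]
        rw [sum_comm (f := fun i j => 1 / N * P i j * Real.logb 2 (Q j))]
    _ = Hvec Q - 1 / N * ∑ i, Hvec (P i) := by
        simp only [Hvec, sum_neg_distrib]
        ring

lemma mean_mean_eq_mean_prod {α ε : Type} [Fintype α] [Fintype ε] (f : α → ε → ℝ) :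
    1 / (Fintype.card α : ℝ) * ∑ x, 1 / (Fintype.card ε : ℝ) * ∑ e, f x e
      = 1 / ((Fintype.card α : ℝ) * Fintype.card ε) * ∑ x, ∑ e, f x e := by
  simp only [mul_sum]
  exact sum_congr rfl fun x _ => sum_congr rfl fun e _ => by ring

lemma mean_prod_eq {α ε : Type} [Fintype α] [Fintype ε] (f : α × ε → ℝ) :
    1 / (Fintype.card (α × ε) : ℝ) * ∑ p, f p
      = 1 / ((Fintype.card α : ℝ) * Fintype.card ε) * ∑ x, ∑ e, f (x, e) := by
  rw [Fintype.card_prod, Fintype.sum_prod_type, Nat.cast_mul]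

section Mechanisms

variable {α ε : Type} [Fintype α] [Fintype ε] (P : α → ε → α → ℝ)

lemma jointMech_mean (y : α) :
    1 / (Fintype.card (α × ε) : ℝ) * ∑ p, jointMech P p y
      = 1 / ((Fintype.card α : ℝ) * Fintype.card ε) * ∑ x, ∑ e, P x e y :=
  mean_prod_eq fun p => jointMech P p y

lemma indivMech_mean (y : α) :
    1 / (Fintype.card α : ℝ) * ∑ x, indivMech P x y
      = 1 / ((Fintype.card α : ℝ) * Fintype.card ε) * ∑ x, ∑ e, P x e y :=
  mean_mean_eq_mean_prod fun x e => P x e y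

lemma extMech_mean (y : α) :
    1 / (Fintype.card ε : ℝ) * ∑ e, extMech P e y
      = 1 / ((Fintype.card α : ℝ) * Fintype.card ε) * ∑ x, ∑ e, P x e y := by
  unfold extMech
  rw [mean_mean_eq_mean_prod (fun e x => P x e y), mul_comm (Fintype.card ε : ℝ),
    sum_comm]

lemma jointMech_mean_entropy :
    1 / (Fintype.card (α × ε) : ℝ) * ∑ p, Hvec (jointMech P p)
      = 1 / ((Fintype.card α : ℝ) * Fintype.card ε) * ∑ x, ∑ e, Hvec (P x e) :=
  mean_prod_eq fun p => Hvec (jointMech P p)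

end Mechanisms

theorem statement9_general {α ε : Type} [Fintype α] [Fintype ε]
    (P : α → ε → α → ℝ) (hPnn : ∀ x e y, 0 ≤ P x e y) :
    flexibility P = expansiveness P + introversion P
      - 2 * Real.logb 2 (Fintype.card α) := by
  have hjoint : ∀ p y, 0 ≤ jointMech P p y := fun p y => hPnn _ _ _
  have hindiv : ∀ x y, 0 ≤ indivMech P x y := fun x y =>
    mul_nonneg (by positivity) (sum_nonneg fun e _ => hPnn _ _ _)
  have hext : ∀ e y, 0 ≤ extMech P e y := fun e y =>
    mul_nonneg (by positivity) (sum_nonneg fun x _ => hPnn _ _ _)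
  rw [flexibility, EI_eq_entropy_mean_sub_mean_entropy _ hjoint,
    EI_eq_entropy_mean_sub_mean_entropy _ hindiv, EI_eq_entropy_mean_sub_mean_entropy _ hext]
  simp only [jointMech_mean, indivMech_mean, extMech_mean, jointMech_mean_entropy]
  unfold expansiveness introversion indivMech extMech
  ring

/-- For any distinct TPM `(P_{x,e})` over finite nonempty state sets `Ω_X, Ω_E`,
the flexibility decomposes as `Syn(P) = Exp(P) + Int(P) − 2·log₂|Ω_X|`. -/
theorem statement9 {α ε : Type} [Fintype α] [Fintype ε] [Nonempty α] [Nonempty ε]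
    (P : α → ε → α → ℝ) (hPnn : ∀ x e y, 0 ≤ P x e y) (hProw : ∀ x e, ∑ y, P x e y = 1) :
    flexibility P = expansiveness P + introversion P
      - 2 * Real.logb 2 (Fintype.card α) :=
  statement9_general P hPnn
end
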